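/- arXiv:2505.02752 — 6 statements merged into one kernel-verified Lean document; each statement's English description precedes it below -/
import Mathlib

section
/- With u(m) and v(m) as above, the function w(m) = u(m)/v(m) is strictly decreasing on [1, ∞) and satisfies w(m) > √τ for all m ≥ 1, with limit √τ as m → ∞. -/
theorem stmt_3 (τ α β : ℕ) (hτ : 0 < τ) (hns : ¬ IsSquare τ)
    (hα : 0 < α) (hβ : 0 < β)
    (hpell : (α : ℝ) ^ 2 - (τ : ℝ) * (β : ℝ) ^ 2 = 1)
    (u v w : ℝ → ℝ)
    (hu : ∀ m : ℝ, u m = (((α : ℝ) + β * Real.sqrt τ) ^ m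
        + ((α : ℝ) - β * Real.sqrt τ) ^ m) / 2)
    (hv : ∀ m : ℝ, v m = (((α : ℝ) + β * Real.sqrt τ) ^ m
        - ((α : ℝ) - β * Real.sqrt τ) ^ m) / (2 * Real.sqrt τ))
    (hw : ∀ m : ℝ, w m = u m / v m) :
    StrictAntiOn w (Set.Ici 1) ∧
    (∀ m : ℝ, 1 ≤ m → Real.sqrt τ < w m) ∧
    Filter.Tendsto w Filter.atTop (nhds (Real.sqrt τ)) := by
  set s := Real.sqrt τ with hsdef
  have hs : 0 < s := Real.sqrt_pos.2 (by exact_mod_cast hτ)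
  have hs2 : s ^ 2 = (τ : ℝ) := Real.sq_sqrt (by positivity)
  set a : ℝ := (α : ℝ) + β * s with hadef
  set b : ℝ := (α : ℝ) - β * s with hbdef
  have hα1 : (1 : ℝ) ≤ α := by exact_mod_cast hα
  have hβ1 : (1 : ℝ) ≤ β := by exact_mod_cast hβ
  have ha1 : 1 < a := by
    have : 0 < (β : ℝ) * s := by positivity
    simp only [hadef]; linarith
  have ha0 : 0 < a := by linarith
  have hab : a * b = 1 := by
    simp only [hadef, hbdef]; nlinarith [hs2, hpell]
  have hb0 : 0 < b := by nlinarith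
  have hbinv : b = a⁻¹ := by field_simp; linarith [hab]
  -- the closed form
  have hwf : ∀ m : ℝ, 0 < m → w m = s + 2 * s / (a ^ (2 * m) - 1) := by
    intro m hm
    have ht1 : 1 < a ^ m := Real.one_lt_rpow_iff_of_pos ha0 |>.2 (Or.inl ⟨ha1, hm⟩)
    have ht0 : 0 < a ^ m := by linarith
    have hbm : b ^ m = (a ^ m)⁻¹ := by
      rw [hbinv, Real.inv_rpow ha0.le]
    have h2m : a ^ (2 * m) = a ^ m * a ^ m := by
      rw [two_mul, Real.rpow_add ha0]
    rw [hw, hu, hv, hbm, h2m]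
    have hne : a ^ m * a ^ m - 1 ≠ 0 := by nlinarith
    field_simp
    ring_nf
    have hne' : -1 + (a ^ m) ^ 2 ≠ 0 := by intro h; nlinarith
    field_simp
    ring
  have key : ∀ m : ℝ, 0 < m → 1 < a ^ (2 * m) := by
    intro m hm
    exact Real.one_lt_rpow_iff_of_pos ha0 |>.2 (Or.inl ⟨ha1, by positivity⟩)
  refine ⟨?_, ?_, ?_⟩
  · intro x hx y hy hxy
    simp only [Set.mem_Ici] at hx hy
    rw [hwf x (by linarith), hwf y (by linarith)]
    have h1 : 1 < a ^ (2 * x) := key x (by linarith)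
    have h2 : a ^ (2 * x) < a ^ (2 * y) :=
      Real.rpow_lt_rpow_left_iff ha1 |>.2 (by linarith)
    have := div_lt_div_of_pos_left (by positivity : (0:ℝ) < 2 * s)
      (by linarith : (0:ℝ) < a ^ (2 * x) - 1) (by linarith : a ^ (2*x) - 1 < a ^ (2*y) - 1)
    linarith
  · intro m hm
    rw [hwf m (by linarith)]
    have h1 : 1 < a ^ (2 * m) := key m (by linarith)
    have : 0 < 2 * s / (a ^ (2 * m) - 1) := div_pos (by positivity) (by linarith)
    linarith
  · have h1 : Filter.Tendsto (fun m : ℝ => a ^ (2 * m)) Filter.atTop Filter.atTop := by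
      have heq : (fun m : ℝ => a ^ (2 * m)) = fun m => Real.exp (Real.log a * (2 * m)) := by
        funext m; rw [Real.rpow_def_of_pos ha0]
      rw [heq]
      exact Real.tendsto_exp_atTop.comp
        ((Filter.tendsto_id.const_mul_atTop two_pos).const_mul_atTop (Real.log_pos ha1))
    have h2 : Filter.Tendsto (fun t : ℝ => s + 2 * s / (t - 1)) Filter.atTop (nhds s) := by
      have h3 : Filter.Tendsto (fun t : ℝ => 2 * s / (t - 1)) Filter.atTop (nhds 0) :=
        Filter.Tendsto.div_atTop tendsto_const_nhds
          (Filter.tendsto_atTop_add_const_right _ (-1) Filter.tendsto_id)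
      simpa using (tendsto_const_nhds.add h3)
    have h4 := h2.comp h1
    refine h4.congr' ?_
    filter_upwards [Filter.eventually_gt_atTop 0] with m hm
    exact (hwf m hm).symm
end

section
/- Let τ be a non-square positive integer, α, β positive integers with α² − τβ² = 1, λ a nonzero integer, and l ∈ {1,2,3,4}. Then the quantity (log(1 + |λ| − (−1)^l·(|λ|/λ)·√τ) − log(2√τ)) / log(α + β√τ) is never an integer. -/
theorem stmt_5 (τ α β : ℕ) (hτ : 0 < τ) (hns : ¬ IsSquare τ)
    (hα : 0 < α) (hβ : 0 < β)
    (hpell : (α : ℝ) ^ 2 - (τ : ℝ) * (β : ℝ) ^ 2 = 1)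
    (lam : ℤ) (hlam : lam ≠ 0) (l : ℕ) (hl : l ∈ ({1, 2, 3, 4} : Set ℕ))
    (hpos : 0 < 1 + |(lam : ℝ)| - (-1 : ℝ) ^ l * (|(lam : ℝ)| / lam) * Real.sqrt τ) :
    ¬ ∃ K : ℤ,
      (Real.log (1 + |(lam : ℝ)| - (-1 : ℝ) ^ l * (|(lam : ℝ)| / lam) * Real.sqrt τ)
          - Real.log (2 * Real.sqrt τ))
        / Real.log ((α : ℝ) + β * Real.sqrt τ) = (K : ℝ) := by
  rintro ⟨K, hK⟩
  have hτ1 : 1 < τ := by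
    by_contra h
    have h1 : τ = 1 := by omega
    exact hns (h1 ▸ ⟨1, rfl⟩)
  have hsirr : Irrational (Real.sqrt τ) := irrational_sqrt_natCast_iff.mpr hns
  have hs0 : (0:ℝ) < Real.sqrt τ := Real.sqrt_pos.mpr (by positivity)
  have hs1 : 1 < Real.sqrt τ := by
    rw [show (1:ℝ) = Real.sqrt 1 by simp]
    exact Real.sqrt_lt_sqrt (by norm_num) (by exact_mod_cast hτ1)
  set s := Real.sqrt τ with hs
  have hss : s * s = (τ:ℝ) := Real.mul_self_sqrt (by positivity)
  set u : ℝ := (α:ℝ) + β * s with hudef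
  have hu1 : 1 < u := by
    have h1 : (1:ℝ) ≤ α := by exact_mod_cast hα
    have h2 : (1:ℝ) ≤ β := by exact_mod_cast hβ
    nlinarith
  have hu0 : (0:ℝ) < u := by linarith
  set X := 1 + |(lam:ℝ)| - (-1:ℝ)^l * (|(lam:ℝ)|/lam) * s with hXdef
  -- Step 1: X = 2 s u^K
  have hX : X = 2 * s * u ^ K := by
    have hlogu : Real.log u ≠ 0 := ne_of_gt (Real.log_pos hu1)
    rw [div_eq_iff hlogu] at hK
    have h1 : Real.log X = Real.log (2 * s * u ^ K) := by
      rw [Real.log_mul (by positivity) (zpow_ne_zero _ (by positivity)),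
        Real.log_zpow]
      linarith
    have h2 : (0:ℝ) < 2 * s * u ^ K := by positivity
    exact Real.log_injOn_pos (Set.mem_Ioi.mpr hpos) (Set.mem_Ioi.mpr h2) h1
  -- Step 2: u^K = p + q s with p q integers
  have hd0 : (0:ℤ) ≤ (τ:ℤ) := by positivity
  set f : ℤ√(τ:ℤ) →+* ℝ := Zsqrtd.toReal hd0 with hf
  have hfapp : ∀ a : ℤ√(τ:ℤ), f a = (a.re : ℝ) + (a.im : ℝ) * s := by
    intro a
    simp [hf, Zsqrtd.toReal, hs]
  set z : ℤ√(τ:ℤ) := ⟨(α:ℤ), (β:ℤ)⟩ with hz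
  have hpellZ : (α:ℤ)^2 - (τ:ℤ)*(β:ℤ)^2 = 1 := by exact_mod_cast hpell
  have hz1 : z * star z = 1 := by
    have hn : Zsqrtd.norm z = 1 := by
      simp only [Zsqrtd.norm, hz]
      ring_nf
      ring_nf at hpellZ
      linarith
    calc z * star z = (Zsqrtd.norm z : ℤ√(τ:ℤ)) := (Zsqrtd.norm_eq_mul_conj z).symm
    _ = 1 := by rw [hn]; simp
  set w : (ℤ√(τ:ℤ))ˣ := ⟨z, star z, hz1, by rw [mul_comm]; exact hz1⟩ with hw
  set v : ℤ√(τ:ℤ) := ((w ^ K : (ℤ√(τ:ℤ))ˣ) : ℤ√(τ:ℤ)) with hv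
  have hfz : f z = u := by rw [hfapp]; simp [hz, hudef]
  have hfv : f v = u ^ K := by
    have h1 : f v = ((Units.map (f : ℤ√(τ:ℤ) →* ℝ)) (w ^ K) : ℝ) := rfl
    have h2 : ((Units.map (f : ℤ√(τ:ℤ) →* ℝ) w : ℝˣ) : ℝ) = u := hfz
    rw [h1, map_zpow, Units.val_zpow_eq_zpow_val, h2]
  -- Step 3: match coefficients
  have hX2 : X = 2 * (τ:ℝ) * v.im + 2 * v.re * s := by
    rw [hX, ← hfv, hfapp]
    linear_combination 2 * (v.im:ℝ) * hss
  -- the sign ε is ±1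
  obtain ⟨e, he, hodd⟩ : ∃ e : ℤ, ((-1:ℝ)^l * (|(lam:ℝ)|/lam)) = (e:ℝ) ∧ (e = 1 ∨ e = -1) := by
    have hsgn : (|(lam:ℝ)|/lam) = 1 ∨ (|(lam:ℝ)|/lam) = -1 := by
      rcases lt_or_gt_of_ne hlam with h | h
      · right
        have h' : (lam:ℝ) < 0 := by exact_mod_cast h
        rw [abs_of_neg h']
        field_simp
      · left
        have h' : (0:ℝ) < lam := by exact_mod_cast h
        rw [abs_of_pos h']
        field_simp
    have hpow : ((-1:ℝ)^l) = 1 ∨ ((-1:ℝ)^l) = -1 := by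
      rcases Nat.even_or_odd l with h | h
      · exact Or.inl (Even.neg_one_pow h)
      · exact Or.inr (Odd.neg_one_pow h)
    rcases hpow with h1 | h1 <;> rcases hsgn with h2 | h2
    · exact ⟨1, by rw [h1, h2]; norm_num, Or.inl rfl⟩
    · exact ⟨-1, by rw [h1, h2]; norm_num, Or.inr rfl⟩
    · exact ⟨-1, by rw [h1, h2]; norm_num, Or.inr rfl⟩
    · exact ⟨1, by rw [h1, h2]; norm_num, Or.inl rfl⟩
  have hX3 : 1 + |(lam:ℝ)| - (e:ℝ) * s = 2 * (τ:ℝ) * v.im + 2 * v.re * s := by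
    rw [← hX2, hXdef, he]
  have hden : ((2*v.re + e : ℤ):ℝ) ≠ 0 := by
    have : 2*v.re + e ≠ 0 := by rcases hodd with h | h <;> omega
    exact_mod_cast this
  have hkey : s = ((1 + |lam| - 2*(τ:ℤ)*v.im : ℤ):ℝ) / ((2*v.re + e : ℤ):ℝ) := by
    rw [eq_div_iff hden]
    push_cast
    linarith [hX3]
  refine hsirr ⟨((1 + |lam| - 2*(τ:ℤ)*v.im : ℤ):ℚ) / ((2*v.re + e : ℤ):ℚ), ?_⟩
  rw [hkey]
  push_cast
  ring
end

section
/- Under the LA2-type hypotheses with j = 1 (a = 1, b = 2λ, D = b²−4c = 4τ with τ positive non-square, E = bd−2e with D ∣ E, d even, E² − D(d²−4f) = −4D), the set of integer solutions (u,v) of u² + buv + cv² + du + ev + f = 0 equals { (ũ − λṽ + (E/D)λ − d/2, ṽ − E/D) : (ũ, ṽ) ∈ ℤ², ũ² − τṽ² = 1 }; in particular, this solution set is infinite. -/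
theorem stmt_9 (b c d e f lam τ d₂ E₂ : ℤ)
    (hb : b = 2 * lam)
    (hD : b ^ 2 - 4 * c = 4 * τ) (hτ : 0 < τ) (hns : ¬ IsSquare τ)
    (hd : d = 2 * d₂)
    (hE : b * d - 2 * e = 4 * τ * E₂)
    (hj : (b * d - 2 * e) ^ 2 - (4 * τ) * (d ^ 2 - 4 * f) = -4 * (4 * τ)) :
    {p : ℤ × ℤ |
        p.1 ^ 2 + b * p.1 * p.2 + c * p.2 ^ 2 + d * p.1 + e * p.2 + f = 0} =
      {p : ℤ × ℤ | ∃ ut vt : ℤ, ut ^ 2 - τ * vt ^ 2 = 1 ∧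
        p = (ut - lam * vt + E₂ * lam - d₂, vt - E₂)} ∧
    {p : ℤ × ℤ |
        p.1 ^ 2 + b * p.1 * p.2 + c * p.2 ^ 2 + d * p.1 + e * p.2 + f = 0}.Infinite := by
  subst hb hd
  -- key scaled relation: 4τ E₂² - (d² - 4f) = -4
  have hτ0 : (τ : ℤ) ≠ 0 := hτ.ne'
  have hkey : 4 * τ * E₂ ^ 2 - ((2 * d₂) ^ 2 - 4 * f) = -4 := by
    have h : 4 * τ * (4 * τ * E₂ ^ 2 - ((2 * d₂) ^ 2 - 4 * f) - (-4)) = 0 := by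
      rw [hE] at hj; ring_nf; ring_nf at hj; linarith [hj]
    have h4 : (4 * τ : ℤ) ≠ 0 := by positivity
    have := mul_eq_zero.mp h
    rcases this with h' | h'
    · exact absurd h' h4
    · linarith
  have hc : c = lam ^ 2 - τ := by linarith
  have he : e = 2 * lam * d₂ - 2 * τ * E₂ := by linarith
  have hf : f = d₂ ^ 2 - τ * E₂ ^ 2 - 1 := by linarith
  subst hc he hf
  have hset : {p : ℤ × ℤ |
        p.1 ^ 2 + 2 * lam * p.1 * p.2 + (lam ^ 2 - τ) * p.2 ^ 2 + 2 * d₂ * p.1 +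
          (2 * lam * d₂ - 2 * τ * E₂) * p.2 + (d₂ ^ 2 - τ * E₂ ^ 2 - 1) = 0} =
      {p : ℤ × ℤ | ∃ ut vt : ℤ, ut ^ 2 - τ * vt ^ 2 = 1 ∧
        p = (ut - lam * vt + E₂ * lam - d₂, vt - E₂)} := by
    ext ⟨u, v⟩
    simp only [Set.mem_setOf_eq]
    constructor
    · intro h
      refine ⟨u + lam * v + d₂, v + E₂, by linear_combination h, ?_⟩
      have h1 : u + lam * v + d₂ - lam * (v + E₂) + E₂ * lam - d₂ = u := by ring
      have h2 : v + E₂ - E₂ = v := by ring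
      simp [Prod.ext_iff, h1, h2]
    · rintro ⟨ut, vt, hp, heq⟩
      obtain ⟨h1, h2⟩ := Prod.mk.injEq .. ▸ heq
      subst h1 h2
      linear_combination hp
  refine ⟨hset, ?_⟩
  rw [hset]
  obtain ⟨a, ha⟩ := Pell.IsFundamental.exists_of_not_isSquare hτ hns
  have hmono := ha.y_strictMono
  refine Set.infinite_of_injective_forall_mem
    (f := fun n : ℤ => ((a ^ n).x - lam * (a ^ n).y + E₂ * lam - d₂, (a ^ n).y - E₂)) ?_ ?_
  · intro m n hmn
    simp only [Prod.mk.injEq] at hmn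
    have : (a ^ m).y = (a ^ n).y := by linarith [hmn.2]
    exact hmono.injective this
  · intro n
    exact ⟨(a ^ n).x, (a ^ n).y, (a ^ n).prop, rfl⟩
end

section
/- With u(m), v(m) as above and λ an integer with λ < √τ, define s¹(m) = u(m) − λv(m) + C for a real constant C. Then s¹ is strictly increasing on [1, ∞). If instead λ > √τ, then s¹ is strictly decreasing on [1, ∞). -/
set_option maxHeartbeats 1000000


theorem stmt_11 (τ α β : ℕ) (hτ : 0 < τ) (hns : ¬ IsSquare τ)
    (hα : 0 < α) (hβ : 0 < β)
    (hpell : (α : ℝ) ^ 2 - (τ : ℝ) * (β : ℝ) ^ 2 = 1)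
    (u v : ℝ → ℝ)
    (hu : ∀ m : ℝ, u m = (((α : ℝ) + β * Real.sqrt τ) ^ m
        + ((α : ℝ) - β * Real.sqrt τ) ^ m) / 2)
    (hv : ∀ m : ℝ, v m = (((α : ℝ) + β * Real.sqrt τ) ^ m
        - ((α : ℝ) - β * Real.sqrt τ) ^ m) / (2 * Real.sqrt τ))
    (lam : ℤ) (C : ℝ) :
    ((lam : ℝ) < Real.sqrt τ →
      StrictMonoOn (fun m : ℝ => u m - (lam : ℝ) * v m + C) (Set.Ici 1)) ∧
    (Real.sqrt τ < (lam : ℝ) →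
      StrictAntiOn (fun m : ℝ => u m - (lam : ℝ) * v m + C) (Set.Ici 1)) := by
  have hτ0 : (0:ℝ) < τ := by exact_mod_cast hτ
  set t := Real.sqrt τ with htdef
  have ht0 : 0 < t := Real.sqrt_pos.2 hτ0
  have ht2 : t ^ 2 = τ := Real.sq_sqrt hτ0.le
  have hα1 : (1:ℝ) ≤ α := by exact_mod_cast hα
  have hβ1 : (1:ℝ) ≤ β := by exact_mod_cast hβ
  set a : ℝ := α + β * t with hadef
  have ha1 : 1 < a := by nlinarith [mul_pos (lt_of_lt_of_le one_pos hβ1) ht0]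
  have ha0 : 0 < a := lt_trans one_pos ha1
  have hab : a * ((α:ℝ) - β * t) = 1 := by
    have h : a * ((α:ℝ) - β * t) = (α:ℝ)^2 - β^2 * t^2 := by ring
    rw [h, ht2]; nlinarith [hpell]
  have hb : (α:ℝ) - β * t = a⁻¹ := eq_inv_of_mul_eq_one_right (by linarith [hab] )
  have ha2t : 2 * t < a := by
    have hβτ : (β:ℝ) * t < α := by
      nlinarith [mul_pos (lt_of_lt_of_le one_pos hβ1) ht0, ht2]
    have h2 : t ≤ β * t := le_mul_of_one_le_left ht0.le hβ1
    rw [hadef]; linarith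
  rw [hb] at hu hv
  clear_value a
  clear_value t
  -- representation
  have hf : ∀ m : ℝ, u m - (lam:ℝ) * v m + C
      = ((t - lam)/(2*t)) * a ^ m + ((t + lam)/(2*t)) * (a ^ m)⁻¹ + C := by
    intro m
    rw [hu, hv, Real.inv_rpow ha0.le]
    have hpm : (0:ℝ) < a ^ m := Real.rpow_pos_of_pos ha0 m
    field_simp
    ring
  -- generic facts about powers
  have hpow : ∀ m1 m2 : ℝ, m1 ∈ Set.Ici (1:ℝ) → m1 < m2 →
      0 < a ^ m1 ∧ a ^ m1 < a ^ m2 ∧ a ^ 2 < a ^ m1 * a ^ m2 := by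
    intro m1 m2 hm1 hlt
    have hx : (0:ℝ) < a ^ m1 := Real.rpow_pos_of_pos ha0 m1
    have hxy : a ^ m1 < a ^ m2 := (Real.rpow_lt_rpow_left_iff ha1).2 hlt
    have hax : a ≤ a ^ m1 := by
      have h := (Real.rpow_le_rpow_left_iff ha1).2 (hm1 : (1:ℝ) ≤ m1)
      rwa [Real.rpow_one] at h
    refine ⟨hx, hxy, ?_⟩
    have hay : a < a ^ m2 := lt_of_le_of_lt hax hxy
    nlinarith
  constructor
  · -- λ < √τ : strictly increasing
    intro hlam
    have hA : 0 < (t - lam)/(2*t) := div_pos (by linarith) (by linarith)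
    -- key inequality : (t - λ) * a^2 > t + λ
    have key : (t + (lam:ℝ)) < (t - lam) * a ^ 2 := by
      rcases le_or_gt (lam:ℝ) 0 with h0 | h0
      · nlinarith [mul_pos (show (0:ℝ) < t - lam by linarith)
          (show (0:ℝ) < a^2 - 1 by nlinarith)]
      · have hl2 : lam ^ 2 < (τ:ℤ) := by
          have h : ((lam:ℝ))^2 < (τ:ℝ) := by nlinarith
          exact_mod_cast h
        have hl2' : ((lam:ℝ))^2 + 1 ≤ τ := by exact_mod_cast hl2
        nlinarith [sq_nonneg (t + lam), sq_nonneg (t - lam)]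
    intro m1 hm1 m2 _ hlt
    obtain ⟨hx, hxy, haxy⟩ := hpow m1 m2 hm1 hlt
    have hy : (0:ℝ) < a ^ m2 := lt_trans hx hxy
    simp only [hf]
    set x := a ^ m1
    set y := a ^ m2
    set A := (t - lam)/(2*t) with hAdef
    set B := (t + lam)/(2*t) with hBdef
    have hkey' : B < A * (x * y) := by
      have h1 : A * (a^2) ≤ A * (x * y) := mul_le_mul_of_nonneg_left haxy.le hA.le
      have h2 : B < A * (a^2) := by
        rw [hAdef, hBdef, div_lt_iff₀ (by linarith), div_mul_eq_mul_div,
          div_mul_eq_mul_div, lt_div_iff₀ (by linarith)]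
        nlinarith
      linarith
    have h3 : B * (y - x) / (x * y) < A * y - A * x := by
      rw [div_lt_iff₀ (mul_pos hx hy)]
      nlinarith
    have h4 : B * x⁻¹ - B * y⁻¹ = B * (y - x) / (x * y) := by
      field_simp
    linarith
  · -- λ > √τ : strictly decreasing
    intro hlam
    have hA : (t - lam)/(2*t) < 0 :=
      div_neg_of_neg_of_pos (by linarith) (by linarith)
    have hB : 0 < (t + lam)/(2*t) := div_pos (by linarith) (by linarith)
    intro m1 hm1 m2 _ hlt
    obtain ⟨hx, hxy, _⟩ := hpow m1 m2 hm1 hlt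
    have hy : (0:ℝ) < a ^ m2 := lt_trans hx hxy
    simp only [hf]
    have hinv : (a ^ m2)⁻¹ < (a ^ m1)⁻¹ := (inv_lt_inv₀ hy hx).2 hxy
    have h1 := mul_lt_mul_of_neg_left hxy hA
    have h2 := mul_lt_mul_of_pos_left hinv hB
    linarith
end

section
/- With u(m), v(m) as above and λ an integer with λ > −√τ, define s²(m) = −u(m) − λv(m) + C for a real constant C. Then s² is strictly decreasing on [1, ∞). If instead λ < −√τ, then s² is strictly increasing on [1, ∞). -/
set_option maxHeartbeats 800000

open Real

theorem stmt_12 (τ α β : ℕ) (hτ : 0 < τ) (hns : ¬ IsSquare τ)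
    (hα : 0 < α) (hβ : 0 < β)
    (hpell : (α : ℝ) ^ 2 - (τ : ℝ) * (β : ℝ) ^ 2 = 1)
    (u v : ℝ → ℝ)
    (hu : ∀ m : ℝ, u m = (((α : ℝ) + β * Real.sqrt τ) ^ m
        + ((α : ℝ) - β * Real.sqrt τ) ^ m) / 2)
    (hv : ∀ m : ℝ, v m = (((α : ℝ) + β * Real.sqrt τ) ^ m
        - ((α : ℝ) - β * Real.sqrt τ) ^ m) / (2 * Real.sqrt τ))
    (lam : ℤ) (C : ℝ) :
    (-Real.sqrt τ < (lam : ℝ) →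
      StrictAntiOn (fun m : ℝ => -u m - (lam : ℝ) * v m + C) (Set.Ici 1)) ∧
    ((lam : ℝ) < -Real.sqrt τ →
      StrictMonoOn (fun m : ℝ => -u m - (lam : ℝ) * v m + C) (Set.Ici 1)) := by
  set s : ℝ := Real.sqrt τ with hs
  have hτ2 : 2 ≤ τ := by
    by_contra h
    have h1 : τ = 1 := by omega
    exact hns (h1 ▸ ⟨1, rfl⟩)
  have hsq : s ^ 2 = (τ : ℝ) := Real.sq_sqrt (by positivity)
  have hs1 : 1 < s := by
    have h1 : (1:ℝ) < (τ:ℝ) := by exact_mod_cast hτ2.trans_lt' one_lt_two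
    nlinarith [Real.sqrt_nonneg (τ:ℝ)]
  have hs0 : 0 < s := by linarith
  set a : ℝ := (α : ℝ) + β * s with ha
  set b : ℝ := (α : ℝ) - β * s with hb
  have hβ1 : (1:ℝ) ≤ (β:ℝ) := by exact_mod_cast hβ
  have hαs : s < (α : ℝ) := by
    have hα1 : (1:ℝ) ≤ (α:ℝ) := by exact_mod_cast hα
    nlinarith [hsq, hα1, hs0, hpell, sq_nonneg ((β:ℝ) - 1), sq_nonneg ((α:ℝ) - s)]
  have ha2s : 2 * s < a := by nlinarith
  have ha1 : 1 < a := by nlinarith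
  have hab : a * b = 1 := by rw [ha, hb]; nlinarith
  have hb0 : 0 < b := by nlinarith
  have hloga : 0 < Real.log a := Real.log_pos ha1
  have hbinv : b = a⁻¹ := by
    field_simp at hab ⊢; linarith
  have hlogb : Real.log b = -Real.log a := by rw [hbinv, Real.log_inv]
  set c1 : ℝ := (s + lam) / (2 * s) with hc1
  set c2 : ℝ := (s - lam) / (2 * s) with hc2
  have hfun : ∀ m : ℝ, -u m - (lam : ℝ) * v m + C = -(c1 * a ^ m) - c2 * b ^ m + C := by
    intro m
    rw [hu, hv, hc1, hc2]
    field_simp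
    ring
  have hderiv : ∀ m : ℝ, HasDerivAt (fun m : ℝ => -u m - (lam : ℝ) * v m + C)
      (Real.log a * (-(c1 * a ^ m) + c2 * b ^ m)) m := by
    intro m
    have h1 := hasStrictDerivAt_const_rpow (a := a) (by linarith) m
    have h2 := hasStrictDerivAt_const_rpow (a := b) hb0 m
    have h3 : HasDerivAt (fun m : ℝ => -(c1 * a ^ m) - c2 * b ^ m + C)
        (-(c1 * (a ^ m * Real.log a)) - c2 * (b ^ m * Real.log b)) m :=
      (((h1.hasDerivAt.const_mul c1).neg.sub (h2.hasDerivAt.const_mul c2)).add_const C)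
    have heq : (fun m : ℝ => -(c1 * a ^ m) - c2 * b ^ m + C)
        = (fun m : ℝ => -u m - (lam : ℝ) * v m + C) := by
      funext m; rw [hfun m]
    rw [heq] at h3
    convert h3 using 1
    rw [hlogb]; ring
  have hpow : ∀ m : ℝ, 1 ≤ m → a ≤ a ^ m := by
    intro m hm
    calc a = a ^ (1:ℝ) := (Real.rpow_one a).symm
    _ ≤ a ^ m := Real.rpow_le_rpow_of_exponent_le (le_of_lt ha1) hm
  have habm : ∀ m : ℝ, a ^ m * b ^ m = 1 := by
    intro m
    rw [← Real.mul_rpow (by linarith) (le_of_lt hb0), hab, Real.one_rpow]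
  have hbm0 : ∀ m : ℝ, 0 < b ^ m := fun m => Real.rpow_pos_of_pos hb0 m
  have ham0 : ∀ m : ℝ, 0 < a ^ m := fun m => Real.rpow_pos_of_pos (by linarith) m
  constructor
  · -- λ > -s : strictly decreasing
    intro hlam
    have hkey : (s - (lam:ℝ)) < (s + lam) * a ^ 2 := by
      rcases le_or_gt 0 (lam : ℝ) with h | h
      · nlinarith
      · have hl0 : lam < 0 := by exact_mod_cast h
        have hk1 : (lam:ℝ) ≤ -1 := by
          have h1 : lam ≤ -1 := by omega
          exact_mod_cast h1
        have hk2 : (lam:ℝ)^2 ≤ (τ:ℝ) - 1 := by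
          have hp : 0 < (s + lam) * (s - lam) := mul_pos (by linarith) (by linarith)
          have h1 : (lam:ℝ)^2 < (τ:ℝ) := by nlinarith [hsq]
          have h2 : lam^2 < (τ:ℤ) := by exact_mod_cast h1
          have h3 : lam^2 ≤ (τ:ℤ) - 1 := by omega
          have h4 : (lam:ℝ)^2 ≤ (τ:ℝ) - 1 := by exact_mod_cast h3
          exact h4
        have hasl : s - (lam:ℝ) < a := by linarith
        have h4 : (1:ℝ) ≤ (s^2 - lam^2) := by rw [hsq]; linarith
        nlinarith [sq_nonneg (s - (lam:ℝ)), sq_nonneg a]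
    apply strictAntiOn_of_deriv_neg (convex_Ici 1)
    · exact fun m _ => ((hderiv m).continuousAt).continuousWithinAt
    · intro m hm
      rw [interior_Ici] at hm
      rw [(hderiv m).deriv]
      have hm1 : 1 ≤ m := le_of_lt hm
      have h1 : a ≤ a ^ m := hpow m hm1
      have haa : a ^ 2 ≤ a ^ m * a ^ m := by nlinarith [ham0 m]
      have h5 : (s - (lam:ℝ)) < (s + lam) * (a ^ m * a ^ m) := by nlinarith
      have h6 : (s - (lam:ℝ)) * b ^ m < (s + lam) * (a ^ m * a ^ m) * b ^ m :=
        mul_lt_mul_of_pos_right h5 (hbm0 m)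
      have h7 : (s + (lam:ℝ)) * (a ^ m * a ^ m) * b ^ m = (s + lam) * a ^ m := by
        rw [show (s + (lam:ℝ)) * (a ^ m * a ^ m) * b ^ m
            = (s + lam) * a ^ m * (a ^ m * b ^ m) from by ring, habm m, mul_one]
      have key2 : (s - (lam:ℝ)) * b ^ m < (s + lam) * a ^ m := by rw [← h7]; exact h6
      have hgoal : c2 * b ^ m < c1 * a ^ m := by
        have h8 : (s - (lam:ℝ)) * b ^ m / (2 * s) < (s + lam) * a ^ m / (2 * s) := by
          have h2s : (0:ℝ) < 2 * s := by linarith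
          exact div_lt_div_of_pos_right key2 h2s
        calc c2 * b ^ m = (s - (lam:ℝ)) * b ^ m / (2 * s) := by rw [hc2]; ring
        _ < (s + lam) * a ^ m / (2 * s) := h8
        _ = c1 * a ^ m := by rw [hc1]; ring
      have h9 : -(c1 * a ^ m) + c2 * b ^ m < 0 := by linarith
      exact mul_neg_of_pos_of_neg hloga h9
  · -- λ < -s : strictly increasing
    intro hlam
    apply strictMonoOn_of_deriv_pos (convex_Ici 1)
    · exact fun m _ => ((hderiv m).continuousAt).continuousWithinAt
    · intro m hm
      rw [(hderiv m).deriv]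
      have h1 : c1 < 0 := div_neg_of_neg_of_pos (by linarith) (by linarith)
      have h2 : 0 < c2 := div_pos (by linarith) (by linarith)
      have hA : 0 < -c1 * a ^ m := mul_pos (by linarith) (ham0 m)
      have hB : 0 < c2 * b ^ m := mul_pos h2 (hbm0 m)
      have h3 : 0 < -(c1 * a ^ m) + c2 * b ^ m := by nlinarith
      exact mul_pos hloga h3
end

section
/- Under the LA2-type setting with j = 1 (a = 1, b = 2λ, τ = (b²−4c)/4 a positive non-square integer, E = bd − 2e divisible by 4τ, d even), for each m ∈ ℕ and each l ∈ {1,2,3,4}, the pair (s_m^{(l)}, t_m^{(l)}) with s_m^{(l)} = (−1)^{⌊l/2⌋}u_m − (−1)^{⌊(l−1)/2⌋}λ v_m + (E/D)λ − d/2 and t_m^{(l)} = (−1)^{⌊(l−1)/2⌋}v_m − E/D is an integer solution of u² + buv + cv² + du + ev + f = 0, where (u_m, v_m) are the positive Pell solutions of x² − τy² = 1 and D = 4τ. Moreover, the sets {(s_m^{(i)}, t_m^{(i)}) : m ∈ ℕ} for i = 1,2,3,4 together with {(±1 + (E/D)λ − d/2, −E/D)} are pairwise disjoint. -/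
theorem stmt_19 (b c d e f lam τ d₂ E₂ : ℤ)
    (hb : b = 2 * lam)
    (hD : b ^ 2 - 4 * c = 4 * τ) (hτpos : 0 < τ) (hns : ¬ IsSquare τ)
    (hd : d = 2 * d₂)
    (hE : b * d - 2 * e = 4 * τ * E₂)
    (hj : (b * d - 2 * e) ^ 2 - (4 * τ) * (d ^ 2 - 4 * f) = -4 * (4 * τ))
    (α β : ℕ) (hα : 0 < α) (hβ : 0 < β)
    (hpell : (α : ℤ) ^ 2 - τ * (β : ℤ) ^ 2 = 1)
    (hfund : ∀ x y : ℤ, x ^ 2 - τ * y ^ 2 = 1 →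
      1 < (x : ℝ) + (y : ℝ) * Real.sqrt τ →
      (α : ℝ) + (β : ℝ) * Real.sqrt τ ≤ (x : ℝ) + (y : ℝ) * Real.sqrt τ)
    (u v : ℕ → ℝ)
    (hu : ∀ m : ℕ, u m = (((α : ℝ) + β * Real.sqrt τ) ^ m
        + ((α : ℝ) - β * Real.sqrt τ) ^ m) / 2)
    (hv : ∀ m : ℕ, v m = (((α : ℝ) + β * Real.sqrt τ) ^ m
        - ((α : ℝ) - β * Real.sqrt τ) ^ m) / (2 * Real.sqrt τ)) :
    (∀ l : ℕ, l ∈ ({1, 2, 3, 4} : Set ℕ) → ∀ m : ℕ, 1 ≤ m → ∀ s t : ℤ,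
      (s : ℝ) = (-1 : ℝ) ^ (l / 2) * u m - (-1 : ℝ) ^ ((l - 1) / 2) * (lam : ℝ) * v m
          + ((E₂ * lam - d₂ : ℤ) : ℝ) →
      (t : ℝ) = (-1 : ℝ) ^ ((l - 1) / 2) * v m - (E₂ : ℝ) →
      s ^ 2 + b * s * t + c * t ^ 2 + d * s + e * t + f = 0) ∧
    ([({(1 + E₂ * lam - d₂, -E₂), (-1 + E₂ * lam - d₂, -E₂)} : Set (ℤ × ℤ)),
      {p : ℤ × ℤ | ∃ m : ℕ, 1 ≤ m ∧
        (p.1 : ℝ) = (-1 : ℝ) ^ (1 / 2) * u m - (-1 : ℝ) ^ ((1 - 1) / 2) * (lam : ℝ) * v m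
            + ((E₂ * lam - d₂ : ℤ) : ℝ) ∧
        (p.2 : ℝ) = (-1 : ℝ) ^ ((1 - 1) / 2) * v m - (E₂ : ℝ)},
      {p : ℤ × ℤ | ∃ m : ℕ, 1 ≤ m ∧
        (p.1 : ℝ) = (-1 : ℝ) ^ (2 / 2) * u m - (-1 : ℝ) ^ ((2 - 1) / 2) * (lam : ℝ) * v m
            + ((E₂ * lam - d₂ : ℤ) : ℝ) ∧
        (p.2 : ℝ) = (-1 : ℝ) ^ ((2 - 1) / 2) * v m - (E₂ : ℝ)},
      {p : ℤ × ℤ | ∃ m : ℕ, 1 ≤ m ∧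
        (p.1 : ℝ) = (-1 : ℝ) ^ (3 / 2) * u m - (-1 : ℝ) ^ ((3 - 1) / 2) * (lam : ℝ) * v m
            + ((E₂ * lam - d₂ : ℤ) : ℝ) ∧
        (p.2 : ℝ) = (-1 : ℝ) ^ ((3 - 1) / 2) * v m - (E₂ : ℝ)},
      {p : ℤ × ℤ | ∃ m : ℕ, 1 ≤ m ∧
        (p.1 : ℝ) = (-1 : ℝ) ^ (4 / 2) * u m - (-1 : ℝ) ^ ((4 - 1) / 2) * (lam : ℝ) * v m
            + ((E₂ * lam - d₂ : ℤ) : ℝ) ∧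
        (p.2 : ℝ) = (-1 : ℝ) ^ ((4 - 1) / 2) * v m - (E₂ : ℝ)}]).Pairwise Disjoint := by

  -- Real setup
  set A : ℝ := (α : ℝ) + β * Real.sqrt τ with hA
  set B : ℝ := (α : ℝ) - β * Real.sqrt τ with hB
  have hτR : (0:ℝ) < (τ:ℝ) := by exact_mod_cast hτpos
  have hsqrt : 0 < Real.sqrt τ := Real.sqrt_pos.mpr hτR
  have hs2 : Real.sqrt τ ^ 2 = τ := Real.sq_sqrt hτR.le
  have hpR : (α:ℝ)^2 - τ * (β:ℝ)^2 = 1 := by exact_mod_cast hpell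
  have hABe : A * B = 1 := by rw [hA, hB]; linear_combination hpR - (β:ℝ)^2 * hs2
  have hA1 : 1 < A := by
    have h1 : (1:ℝ) ≤ (α:ℝ) := by exact_mod_cast hα
    have h2 : (1:ℝ) ≤ (β:ℝ) := by exact_mod_cast hβ
    rw [hA]; nlinarith
  have hApos : 0 < A := by linarith
  have hBpos : 0 < B := by by_contra h; push_neg at h; nlinarith
  have hB1 : B < 1 := by nlinarith
  have hABm : ∀ m : ℕ, A ^ m * B ^ m = 1 := by
    intro m; rw [← mul_pow, hABe, one_pow]
  have hUV : ∀ m : ℕ, u m ^ 2 - τ * v m ^ 2 = 1 := by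
    intro m
    rw [hu, hv]
    have hne : Real.sqrt τ ≠ 0 := ne_of_gt hsqrt
    field_simp
    linear_combination ((A^m+B^m)^2 - 4) * hs2 + 4*(τ:ℝ) * hABm m
  have hvpos : ∀ m : ℕ, 1 ≤ m → 0 < v m := by
    intro m hm
    rw [hv]
    have : B ^ m < A ^ m := pow_lt_pow_left₀ (by linarith) hBpos.le (by omega)
    exact div_pos (by linarith) (by positivity)
  have hupos : ∀ m : ℕ, 0 < u m := by
    intro m
    rw [hu]
    have h1 := pow_pos hApos m
    have h2 := pow_pos hBpos m
    positivity
  have hvmono : StrictMono v := by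
    apply strictMono_nat_of_lt_succ
    intro m
    rw [hv, hv]
    have h1 := pow_pos hApos m
    have h2 := pow_pos hBpos m
    have key : A ^ m - B ^ m < A ^ (m+1) - B ^ (m+1) := by
      rw [pow_succ, pow_succ]; nlinarith
    gcongr
  have hvinj : Function.Injective v := hvmono.injective
  -- Integer facts
  have hτne : (τ:ℤ) ≠ 0 := ne_of_gt hτpos
  have hc : c = lam^2 - τ := by
    have h4 : 4 * c = 4 * (lam^2 - τ) := by linear_combination -hD + (b + 2*lam) * hb
    exact mul_left_cancel₀ (by norm_num : (4:ℤ) ≠ 0) h4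
  have he : e = 2*lam*d₂ - 2*τ*E₂ := by
    have h2 : 2 * e = 2 * (2*lam*d₂ - 2*τ*E₂) := by
      linear_combination -hE + d*hb + 2*lam*hd
    exact mul_left_cancel₀ (by norm_num : (2:ℤ) ≠ 0) h2
  have hf : f = d₂^2 - τ*E₂^2 - 1 := by
    have h16 : (16*τ) * f = (16*τ) * (d₂^2 - τ*E₂^2 - 1) := by
      linear_combination hj - (b*d - 2*e + 4*τ*E₂) * hE + 4*τ*(d + 2*d₂) * hd
    exact mul_left_cancel₀ (by intro h; exact hτne (by linarith [mul_eq_zero.mp h])) h16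
  constructor
  · -- solutions
    intro l hl m hm s t hs ht
    simp only [Set.mem_insert_iff, Set.mem_singleton_iff] at hl
    have key : (s:ℝ)^2 + (b:ℝ)*(s:ℝ)*(t:ℝ) + (c:ℝ)*(t:ℝ)^2 + (d:ℝ)*(s:ℝ) + (e:ℝ)*(t:ℝ) + (f:ℝ) = 0 := by
      rcases hl with rfl|rfl|rfl|rfl <;> norm_num at hs ht <;>
        rw [hs, ht] <;> push_cast [hb, hc, hd, he, hf] <;> linear_combination hUV m
    exact_mod_cast key
  · -- disjointness
    simp only [List.pairwise_cons, List.mem_cons, List.mem_singleton, List.not_mem_nil,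
      or_false, forall_eq_or_imp, forall_eq, List.Pairwise.nil, and_true]
    refine ⟨⟨?_, ?_, ?_, ?_⟩, ⟨?_, ?_, ?_⟩, ⟨?_, ?_⟩, ⟨?_, fun _ h => h.elim⟩⟩
    all_goals try rw [Set.disjoint_left]
    all_goals rintro ⟨p1, p2⟩ hp hq
    · simp only [Set.mem_insert_iff, Set.mem_singleton_iff, Prod.mk.injEq] at hp
      simp only [Set.mem_setOf_eq] at hq
      obtain ⟨m, hm, hs1, ht1⟩ := hq
      norm_num at ht1
      have h2 : ((p2:ℤ):ℝ) = -(E₂:ℝ) := by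
        rcases hp with ⟨h1, h2⟩ | ⟨h1, h2⟩ <;> (subst h2; push_cast; ring)
      linarith [hvpos m hm]
    · simp only [Set.mem_insert_iff, Set.mem_singleton_iff, Prod.mk.injEq] at hp
      simp only [Set.mem_setOf_eq] at hq
      obtain ⟨m, hm, hs1, ht1⟩ := hq
      norm_num at ht1
      have h2 : ((p2:ℤ):ℝ) = -(E₂:ℝ) := by
        rcases hp with ⟨h1, h2⟩ | ⟨h1, h2⟩ <;> (subst h2; push_cast; ring)
      linarith [hvpos m hm]
    · simp only [Set.mem_insert_iff, Set.mem_singleton_iff, Prod.mk.injEq] at hp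
      simp only [Set.mem_setOf_eq] at hq
      obtain ⟨m, hm, hs1, ht1⟩ := hq
      norm_num at ht1
      have h2 : ((p2:ℤ):ℝ) = -(E₂:ℝ) := by
        rcases hp with ⟨h1, h2⟩ | ⟨h1, h2⟩ <;> (subst h2; push_cast; ring)
      linarith [hvpos m hm]
    · simp only [Set.mem_insert_iff, Set.mem_singleton_iff, Prod.mk.injEq] at hp
      simp only [Set.mem_setOf_eq] at hq
      obtain ⟨m, hm, hs1, ht1⟩ := hq
      norm_num at ht1
      have h2 : ((p2:ℤ):ℝ) = -(E₂:ℝ) := by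
        rcases hp with ⟨h1, h2⟩ | ⟨h1, h2⟩ <;> (subst h2; push_cast; ring)
      linarith [hvpos m hm]
    · simp only [Set.mem_setOf_eq] at hp hq
      obtain ⟨m, hm, hs1, ht1⟩ := hp
      obtain ⟨m', hm', hs1', ht1'⟩ := hq
      norm_num at hs1 ht1 hs1' ht1'
      have hvv : v m = v m' := by linarith
      cases hvinj hvv
      linarith [hupos m]
    · simp only [Set.mem_setOf_eq] at hp hq
      obtain ⟨m, hm, hs1, ht1⟩ := hp
      obtain ⟨m', hm', hs1', ht1'⟩ := hq
      norm_num at ht1 ht1'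
      linarith [hvpos m hm, hvpos m' hm']
    · simp only [Set.mem_setOf_eq] at hp hq
      obtain ⟨m, hm, hs1, ht1⟩ := hp
      obtain ⟨m', hm', hs1', ht1'⟩ := hq
      norm_num at ht1 ht1'
      linarith [hvpos m hm, hvpos m' hm']
    · simp only [Set.mem_setOf_eq] at hp hq
      obtain ⟨m, hm, hs1, ht1⟩ := hp
      obtain ⟨m', hm', hs1', ht1'⟩ := hq
      norm_num at ht1 ht1'
      linarith [hvpos m hm, hvpos m' hm']
    · simp only [Set.mem_setOf_eq] at hp hq
      obtain ⟨m, hm, hs1, ht1⟩ := hp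
      obtain ⟨m', hm', hs1', ht1'⟩ := hq
      norm_num at ht1 ht1'
      linarith [hvpos m hm, hvpos m' hm']
    · simp only [Set.mem_setOf_eq] at hp hq
      obtain ⟨m, hm, hs1, ht1⟩ := hp
      obtain ⟨m', hm', hs1', ht1'⟩ := hq
      norm_num at hs1 ht1 hs1' ht1'
      have hvv : v m = v m' := by linarith
      cases hvinj hvv
      linarith [hupos m]
end
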